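/- For every positive integer n and every positive integer r, the statistics rdes and exc_r are equidistributed over S_n: for every nonnegative integer k, the number of permutations π ∈ S_n with rdes(π) = k equals the number of permutations π ∈ S_n with exc_r(π) = k. -/

import Mathlib

open Finset

/-- The value of the permutation `π ∈ S_n` at the (1-based) position `i`,
in one-line notation with letters `1,…,n`; `0` if `i` is out of range. -/
def pval {n : ℕ} (π : Equiv.Perm (Fin n)) (i : ℕ) : ℕ :=
  if h : 1 ≤ i ∧ i ≤ n then ((π ⟨i - 1, by omega⟩ : Fin n) : ℕ) + 1 else 0

/-- The number of inversions of a word `w`, i.e. pairs of positions `i < j`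
with `w_i > w_j`. -/
def winv (w : List ℕ) : ℕ :=
  ((Finset.range w.length ×ˢ Finset.range w.length).filter
    (fun p => p.1 < p.2 ∧ w.getD p.2 0 < w.getD p.1 0)).card

/-- `rDes(π) = {i ∈ [n-1] : π_i ≥ π_{i+1} + r}`. -/
def rDesSet {n : ℕ} (r : ℕ) (π : Equiv.Perm (Fin n)) : Finset ℕ :=
  (Finset.Icc 1 (n - 1)).filter (fun i => pval π (i + 1) + r ≤ pval π i)

/-- The `r`-descent number `rdes(π)`. -/
def rdes {n : ℕ} (r : ℕ) (π : Equiv.Perm (Fin n)) : ℕ := (rDesSet r π).card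

/-- `rInv(π) = {(i,j) : i < j, π_i > π_j, π_i < π_j + r}`. -/
def rInvSet {n : ℕ} (r : ℕ) (π : Equiv.Perm (Fin n)) : Finset (ℕ × ℕ) :=
  ((Finset.Icc 1 n) ×ˢ (Finset.Icc 1 n)).filter
    (fun p => p.1 < p.2 ∧ pval π p.2 < pval π p.1 ∧ pval π p.1 < pval π p.2 + r)

/-- The `r`-major index `rmaj(π) = ∑_{i ∈ rDes(π)} i + |rInv(π)|`. -/
def rmaj {n : ℕ} (r : ℕ) (π : Equiv.Perm (Fin n)) : ℕ :=
  (∑ i ∈ rDesSet r π, i) + (rInvSet r π).card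

/-- The inversion number `inv(π)`: the number of pairs `i < j` with `π_i > π_j`. -/
def invStat {n : ℕ} (π : Equiv.Perm (Fin n)) : ℕ :=
  (((Finset.Icc 1 n) ×ˢ (Finset.Icc 1 n)).filter
    (fun p => p.1 < p.2 ∧ pval π p.2 < pval π p.1)).card

/-- `Excp_r(π)`: the set of `r`-level excedance places, i.e. indices `i`
with `π_i > i` and `π_i ≥ r`. -/
def excpSet {n : ℕ} (r : ℕ) (π : Equiv.Perm (Fin n)) : Finset ℕ :=
  (Finset.Icc 1 n).filter (fun i => i < pval π i ∧ r ≤ pval π i)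

/-- `Exc_r(π)`: the subword of `π` on the `r`-level excedance places,
in increasing order of position. -/
def excWord {n : ℕ} (r : ℕ) (π : Equiv.Perm (Fin n)) : List ℕ :=
  ((excpSet r π).sort (· ≤ ·)).map (pval π)

/-- `Nexc_r(π)`: the subword of `π` on the non-`r`-level-excedance places,
in increasing order of position. -/
def nexcWord {n : ℕ} (r : ℕ) (π : Equiv.Perm (Fin n)) : List ℕ :=
  (((Finset.Icc 1 n) \ excpSet r π).sort (· ≤ ·)).map (pval π)

/-- The `r`-level Denert statistic
`den_r(π) = ∑_{i ∈ Excp_r(π)} i + inv(Exc_r(π)) + inv(Nexc_r(π))`. -/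
def denr {n : ℕ} (r : ℕ) (π : Equiv.Perm (Fin n)) : ℕ :=
  (∑ i ∈ excpSet r π, i) + winv (excWord r π) + winv (nexcWord r π)

/-- The `r`-level excedance number `exc_r(π) = |{i : π_i > i ≥ r}|`. -/
def excr {n : ℕ} (r : ℕ) (π : Equiv.Perm (Fin n)) : ℕ :=
  ((Finset.Icc 1 n).filter (fun i => r ≤ i ∧ i < pval π i)).card

/-!
Both statistics obey the same recursion when the new largest letter `n + 1` is inserted into a
permutation `π ∈ S_n`. Every `σ ∈ S_{n+1}` arises exactly once by inserting `n + 1` at one of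
`n + 1` places: into the one-line notation of `π` (for `rdes`), or into the cycle notation of `π`,
right after some `j` or as a new fixed point (for `exc_r`). Either way the statistic grows by `0`
or `1`, and it grows at exactly `(n + 1 - r) - stat(π)` of the places. So both distributions on
`S_{n+1}` are obtained from those on `S_n` by the same rule, and induction on `n` concludes.

For `rdes`, inserting `n + 1` just before the letter `π_i` creates the `r`-descent `(n + 1, π_i)`
iff `π_i ≤ n + 1 - r`, and destroys the pair `(π_{i-1}, π_i)`; the good places are thus the
`n + 1 - r` letters `π_i ≤ n + 1 - r` minus the `r`-descent bottoms. For `exc_r`, inserting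
`n + 1` after `j` makes `j` an excedance, a new `r`-level one iff `r ≤ j` and `j` was not one.
-/

open Equiv Function Finset

section Distribution

variable {α ι β : Type*} [Fintype α] [Fintype ι] [Fintype β]

theorem Finset.card_filter_eq_count_map_univ (f : α → ℕ) (k : ℕ) :
    #{a | f a = k} = (univ.val.map f).count k := by
  rw [Multiset.count_map, card_def, filter_val]
  simp only [eq_comm]

theorem Multiset.map_univ_add_ite (P : ι → Prop) [DecidablePred P] (m : ℕ) :
    univ.val.map (fun i => m + if P i then 1 else 0) =
      replicate (Fintype.card ι - #{i | P i}) m + replicate #{i | P i} (m + 1) := by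
  rw [← filter_add_not P univ.val, map_add, add_comm]
  congr 1 <;> rw [eq_replicate] <;> constructor
  · rw [card_map, ← filter_val, card_val, ← card_univ]
    exact Nat.eq_sub_of_add_eq' (card_filter_add_card_filter_not P)
  · simp +contextual
  · rw [card_map, ← filter_val, card_val]
  · simp +contextual

theorem map_univ_eq_bind_of_insertion {F : α × ι → β} (hF : Bijective F) {f : α → ℕ} {g : β → ℕ}
    {c : ℕ} {C : α → ι → Prop} [∀ a, DecidablePred (C a)]
    (hg : ∀ a i, g (F (a, i)) = f a + if C a i then 1 else 0) (hC : ∀ a, #{i | C a i} = c - f a) :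
    univ.val.map g = (univ.val.map f).bind fun m =>
      .replicate (Fintype.card ι - (c - m)) m + .replicate (c - m) (m + 1) := by
  rw [← Multiset.map_univ_val_equiv (Equiv.ofBijective F hF), Multiset.map_map,
    ← univ_product_univ, product_val]
  simp only [SProd.sprod, Multiset.product, Multiset.map_bind, Multiset.bind_map]
  refine Multiset.bind_congr fun a _ => ?_
  rw [Multiset.map_map, ← hC, ← Multiset.map_univ_add_ite]
  exact Multiset.map_congr rfl fun i _ => hg a i

end Distribution

theorem Finset.card_filter_Icc_one (m : ℕ) (P : ℕ → Prop) [DecidablePred P] :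
    #{i ∈ Icc 1 m | P i} = #{j ∈ range m | P (j + 1)} := by
  refine card_nbij' (· - 1) (· + 1) ?_ ?_ ?_ ?_ <;> intro i hi <;>
    simp only [coe_filter, Set.mem_ofPred_eq, mem_Icc, mem_range] at hi ⊢
  · exact ⟨by omega, Nat.sub_add_cancel hi.1.1 ▸ hi.2⟩
  · exact ⟨by omega, hi.2⟩
  · omega
  · omega

theorem Fin.card_filter_univ_val (N : ℕ) (P : ℕ → Prop) [DecidablePred P] :
    #{i : Fin N | P i} = #{i ∈ range N | P i} := by
  rw [card_filter, card_filter, Fin.sum_univ_eq_sum_range (fun i => if P i then 1 else 0)]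

def List.rdes (r : ℕ) : List ℕ → ℕ
  | a :: b :: t => (if b + r ≤ a then 1 else 0) + rdes r (b :: t)
  | _ => 0

theorem List.rdes_eq_card (r : ℕ) (w : List ℕ) :
    w.rdes r = #{p ∈ Finset.range w.length | 0 < p ∧ w.getD p 0 + r ≤ w.getD (p - 1) 0} := by
  induction w with
  | nil => rfl
  | cons a t ih =>
    cases t with
    | nil => rfl
    | cons b t =>
      rw [rdes, ih, card_filter, card_filter]
      simp only [length_cons, Finset.sum_range_succ', getD_cons_succ, getD_cons_zero,
        Nat.add_sub_cancel, Nat.lt_irrefl, false_and, if_false, Nat.succ_pos, true_and, add_zero]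
      ring

/-- Inserting a letter `v` larger than all letters of `w` at position `p`, i.e. just before
`w[p]`, creates a new `r`-descent. -/
def List.InsertCreatesRDes (r v : ℕ) (w : List ℕ) (p : ℕ) : Prop :=
  p < w.length ∧ w.getD p 0 + r ≤ v ∧ ¬(0 < p ∧ w.getD p 0 + r ≤ w.getD (p - 1) 0)

instance (r v : ℕ) (w : List ℕ) : DecidablePred (w.InsertCreatesRDes r v) :=
  fun _ => inferInstanceAs (Decidable (_ ∧ _))

theorem List.rdes_insertIdx (r : ℕ) {v : ℕ} {w : List ℕ} (hv : ∀ x ∈ w, x < v) {p : ℕ}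
    (hp : p ≤ w.length) :
    (w.insertIdx p v).rdes r = w.rdes r + if w.InsertCreatesRDes r v p then 1 else 0 := by
  induction w generalizing p with
  | nil =>
    obtain rfl : p = 0 := by simpa using hp
    simp [rdes, InsertCreatesRDes]
  | cons a t ih =>
    have ha : a < v := hv a mem_cons_self
    rcases p with _ | q
    · simp [rdes, InsertCreatesRDes, add_comm]
    rcases t with _ | ⟨b, t⟩
    · obtain rfl : q = 0 := by simpa using hp
      simpa [rdes, InsertCreatesRDes] using ha.trans_le (Nat.le_add_right v r)
    have hb : b < v := hv b (by simp)
    rcases q with _ | q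
    · simp only [insertIdx_succ_cons, insertIdx_zero, rdes, InsertCreatesRDes, length_cons,
        getD_cons_succ, getD_cons_zero, Nat.add_sub_cancel]
      split_ifs <;> omega
    · have hcond : (b :: t).InsertCreatesRDes r v (q + 1) ↔
          (a :: b :: t).InsertCreatesRDes r v (q + 2) := by
        simp [InsertCreatesRDes]
      rw [insertIdx_succ_cons, insertIdx_succ_cons, rdes, ← insertIdx_succ_cons,
        ih (fun x hx => hv x (mem_cons_of_mem a hx)) (by simpa using hp), rdes,
        if_congr hcond rfl rfl, add_assoc]

theorem List.card_filter_insertCreatesRDes (r : ℕ) {v : ℕ} {w : List ℕ} (hv : ∀ x ∈ w, x < v) :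
    #{p ∈ Finset.range (w.length + 1) | w.InsertCreatesRDes r v p} =
      #{p ∈ Finset.range w.length | w.getD p 0 + r ≤ v} - w.rdes r := by
  have hlt (q : ℕ) (hq : q < w.length) : w.getD q 0 < v := by
    rw [getD_eq_getElem _ _ hq]; exact hv _ (getElem_mem hq)
  rw [rdes_eq_card, ← card_sdiff_of_subset]
  · congr 1
    ext p
    simp only [Finset.mem_filter, Finset.mem_range, Finset.mem_sdiff]
    unfold InsertCreatesRDes
    omega
  · intro p
    simp only [Finset.mem_filter, Finset.mem_range]
    have := hlt (p - 1)
    omega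

namespace Equiv.Perm

variable {n : ℕ}

theorem bijective_of_apply_eq_last {F : Perm (Fin n) × Fin (n + 1) → Perm (Fin (n + 1))}
    (hF : ∀ π p, F (π, p) p = Fin.last n) (hinj : ∀ p, Injective fun π => F (π, p)) :
    Bijective F := by
  rw [Fintype.bijective_iff_injective_and_card]
  refine ⟨fun ⟨π, p⟩ ⟨π', p'⟩ h => ?_, by simp [Fintype.card_perm, Nat.factorial_succ, mul_comm]⟩
  obtain rfl : p = p' := (F (π', p')).injective (by rw [← h, hF, h, hF])
  rw [hinj p h]

/-- Inserts the letter `n + 1` into the one-line notation of `π` at the `0`-based position `p`. -/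
def insertMax (π : Perm (Fin n)) (p : Fin (n + 1)) : Perm (Fin (n + 1)) :=
  (finSuccEquiv' p).trans (π.optionCongr.trans (finSuccEquiv' (Fin.last n)).symm)

@[simp]
theorem insertMax_apply_self (π : Perm (Fin n)) (p : Fin (n + 1)) :
    insertMax π p p = Fin.last n := by
  simp [insertMax]

@[simp]
theorem insertMax_apply_succAbove (π : Perm (Fin n)) (p : Fin (n + 1)) (j : Fin n) :
    insertMax π p (p.succAbove j) = (π j).castSucc := by
  simp [insertMax]

theorem bijective_insertMax :
    Bijective fun x : Perm (Fin n) × Fin (n + 1) => insertMax x.1 x.2 :=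
  bijective_of_apply_eq_last (fun _ _ => insertMax_apply_self _ _) fun p π π' h =>
    ext fun j => Fin.castSucc_injective n <| by
      simpa using congr($h (p.succAbove j))

/-- Inserts `n + 1` into the cycle of `π` through `j`, right after `j`; for `j = n` (`0`-based),
as a new fixed point. -/
def cycleInsertMax (π : Perm (Fin n)) (j : Fin (n + 1)) : Perm (Fin (n + 1)) :=
  insertMax π (Fin.last n) * swap j (Fin.last n)

theorem bijective_cycleInsertMax :
    Bijective fun x : Perm (Fin n) × Fin (n + 1) => cycleInsertMax x.1 x.2 :=
  bijective_of_apply_eq_last (fun _ _ => by simp [cycleInsertMax]) fun j π π' h =>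
    bijective_insertMax.1 (a₁ := (π, Fin.last n)) (a₂ := (π', Fin.last n))
      (mul_right_cancel h) |> congrArg Prod.fst

def oneLine (π : Perm (Fin n)) : List ℕ := List.ofFn fun j => (π j : ℕ) + 1

@[simp]
theorem length_oneLine (π : Perm (Fin n)) : π.oneLine.length = n := List.length_ofFn

theorem lt_of_mem_oneLine (π : Perm (Fin n)) {x : ℕ} (hx : x ∈ π.oneLine) : x < n + 1 := by
  obtain ⟨j, rfl⟩ := List.mem_ofFn.1 hx
  exact Nat.succ_lt_succ (π j).isLt

end Equiv.Perm

open Equiv.Perm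

section OneLine

variable {n : ℕ}

theorem pval_succ (π : Perm (Fin n)) (j : Fin n) : pval π (j + 1) = π j + 1 := by
  simp [pval]

theorem pval_eq_zero (π : Perm (Fin n)) {i : ℕ} (hi : i = 0 ∨ n < i) : pval π i = 0 := by
  rw [pval, dif_neg (by omega)]

theorem pval_le (π : Perm (Fin n)) (i : ℕ) : pval π i ≤ n := by
  unfold pval; split_ifs <;> omega

theorem card_filter_range_pval (π : Perm (Fin n)) (P : ℕ → Prop) [DecidablePred P] :
    #{j ∈ range n | P (pval π (j + 1))} = #{j ∈ range n | P (j + 1)} := by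
  rw [← Fin.card_filter_univ_val, ← Fin.card_filter_univ_val, card_filter, card_filter]
  simp only [pval_succ]
  exact Equiv.sum_comp π (fun j : Fin n => if P (j + 1) then 1 else 0)

theorem pval_insertMax (π : Perm (Fin n)) (p : Fin (n + 1)) (i : ℕ) :
    pval (insertMax π p) i =
      if i ≤ p then pval π i else if i = p + 1 then n + 1 else pval π (i - 1) := by
  rcases i with _ | k
  · simp [pval_eq_zero]
  rcases Nat.lt_or_ge n k with hk | hk
  · rw [pval_eq_zero _ (by omega), if_neg (by omega), if_neg (by omega), pval_eq_zero _ (by omega)]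
  have hq : pval (insertMax π p) (k + 1) = insertMax π p ⟨k, by omega⟩ + 1 := pval_succ _ ⟨k, _⟩
  rcases lt_trichotomy k p with h | rfl | h
  · have : (⟨k, by omega⟩ : Fin (n + 1)) = p.succAbove ⟨k, by omega⟩ :=
      (Fin.succAbove_of_castSucc_lt p ⟨k, by omega⟩ h).symm
    rw [if_pos (by omega), hq, this, insertMax_apply_succAbove, Fin.val_castSucc, ← pval_succ]
  · simp [hq]
  · have : (⟨k, by omega⟩ : Fin (n + 1)) = p.succAbove ⟨k - 1, by omega⟩ := by
      rw [Fin.succAbove_of_le_castSucc _ _ (Fin.le_def.2 (by rw [Fin.val_castSucc]; dsimp only; omega))]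
      ext; rw [Fin.val_succ]; dsimp only; omega
    rw [if_neg (by omega), if_neg (by omega), hq, this, insertMax_apply_succAbove,
      Fin.val_castSucc, ← pval_succ]
    congr 1; dsimp only; omega

theorem pval_cycleInsertMax (π : Perm (Fin n)) (j : Fin (n + 1)) (i : ℕ) :
    pval (cycleInsertMax π j) i =
      if i = j + 1 then n + 1 else if i = n + 1 then pval π (j + 1) else pval π i := by
  rcases i with _ | k
  · simp [pval_eq_zero]
  rcases Nat.lt_or_ge n k with hk | hk
  · rw [pval_eq_zero _ (by omega), if_neg (by omega), if_neg (by omega), pval_eq_zero _ (by omega)]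
  have hlast (m : Fin n) : insertMax π (Fin.last n) m.castSucc = (π m).castSucc := by
    rw [← Fin.succAbove_last_apply, insertMax_apply_succAbove]
  rw [show pval (cycleInsertMax π j) (k + 1) = _ from pval_succ _ ⟨k, by omega⟩, cycleInsertMax,
    mul_apply]
  by_cases hkj : k = j
  · simp [hkj]
  rw [if_neg (by omega)]
  by_cases hkn : k = n
  · obtain ⟨j', rfl⟩ : ∃ j' : Fin n, j = j'.castSucc := ⟨⟨j, by omega⟩, rfl⟩
    rw [if_pos (by omega), show (⟨k, _⟩ : Fin (n + 1)) = Fin.last n from Fin.ext hkn,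
      swap_apply_right, hlast, Fin.val_castSucc, Fin.val_castSucc, pval_succ]
  · rw [if_neg (by omega), swap_apply_of_ne_of_ne (by simp [Fin.ext_iff, hkj])
      (by simp [Fin.ext_iff, hkn]), show (⟨k, _⟩ : Fin (n + 1)) = (⟨k, by omega⟩ : Fin n).castSucc
      from rfl, hlast, Fin.val_castSucc, ← pval_succ]

theorem getD_oneLine (π : Perm (Fin n)) (j : ℕ) : π.oneLine.getD j 0 = pval π (j + 1) := by
  rcases lt_or_ge j n with h | h
  · rw [List.getD_eq_getElem _ _ (by simpa using h), pval_succ π ⟨j, h⟩]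
    simp [oneLine]
  · rw [List.getD_eq_default _ _ (by simpa using h), pval_eq_zero _ (by omega)]

theorem oneLine_insertMax (π : Perm (Fin n)) (p : Fin (n + 1)) :
    (insertMax π p).oneLine = π.oneLine.insertIdx p (n + 1) := by
  refine List.ext_getElem (by simp [List.length_insertIdx, p.is_le]) fun j h₁ h₂ => ?_
  rw [List.getElem_insertIdx, ← List.getD_eq_getElem _ 0, getD_oneLine, pval_insertMax]
  simp only [← List.getD_eq_getElem _ 0, getD_oneLine]
  split_ifs <;> first | omega | rfl | congr 1; omega

end OneLine

section RDes

variable {n : ℕ}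

theorem rdes_eq_rdes_oneLine (r : ℕ) (π : Perm (Fin n)) : rdes r π = π.oneLine.rdes r := by
  rw [List.rdes_eq_card, rdes, rDesSet, length_oneLine]
  congr 1
  ext (_ | i) <;> simp only [mem_filter, mem_Icc, Finset.mem_range, getD_oneLine,
    Nat.add_sub_cancel] <;> omega

theorem rdes_insertMax (r : ℕ) (π : Perm (Fin n)) (p : Fin (n + 1)) :
    rdes r (insertMax π p) =
      rdes r π + if π.oneLine.InsertCreatesRDes r (n + 1) p then 1 else 0 := by
  rw [rdes_eq_rdes_oneLine, rdes_eq_rdes_oneLine, oneLine_insertMax]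
  exact List.rdes_insertIdx r (fun _ => π.lt_of_mem_oneLine) (by simpa using p.is_le)

theorem card_filter_insertCreatesRDes_oneLine {r : ℕ} (hr : 1 ≤ r) (π : Perm (Fin n)) :
    #{p : Fin (n + 1) | π.oneLine.InsertCreatesRDes r (n + 1) p} = (n + 1 - r) - rdes r π := by
  have h := List.card_filter_insertCreatesRDes r fun _ => π.lt_of_mem_oneLine
  have hall : {j ∈ range n | j + 1 + r ≤ n + 1} = range (n + 1 - r) := by
    ext j; simp only [mem_filter, mem_range]; omega
  simp only [length_oneLine, getD_oneLine] at h
  rw [Fin.card_filter_univ_val _ (π.oneLine.InsertCreatesRDes r (n + 1)), h, rdes_eq_rdes_oneLine,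
    card_filter_range_pval π (· + r ≤ n + 1), hall, card_range]

end RDes

section Excedances

variable {n : ℕ}

theorem excr_cycleInsertMax (r : ℕ) (π : Perm (Fin n)) (j : Fin (n + 1)) :
    excr r (cycleInsertMax π j) =
      excr r π + if (j : ℕ) < n ∧ r ≤ j + 1 ∧ pval π (j + 1) ≤ j + 1 then 1 else 0 := by
  set E := {i ∈ Icc 1 n | r ≤ i ∧ i < pval π i}
  have hE : {i ∈ Icc 1 (n + 1) | r ≤ i ∧ i < pval (cycleInsertMax π j) i} =
      if (j : ℕ) < n ∧ r ≤ j + 1 then insert ((j : ℕ) + 1) E else E := by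
    have := pval_le π (j + 1)
    ext i
    have := pval_le π i
    simp only [E, mem_filter, mem_Icc, pval_cycleInsertMax]
    split_ifs <;> simp only [mem_insert, mem_filter, mem_Icc] <;> omega
  rw [excr, hE, excr]
  split_ifs with h₁ h₂ h₂
  · rw [card_insert_of_notMem (by simp only [E, mem_filter, mem_Icc]; omega)]
  · rw [insert_eq_of_mem (by simp only [E, mem_filter, mem_Icc]; omega), add_zero]
  · exact absurd ⟨h₂.1, h₂.2.1⟩ h₁
  · rfl

theorem card_filter_nonexcedance {r : ℕ} (hr : 1 ≤ r) (π : Perm (Fin n)) :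
    #{j : Fin (n + 1) | (j : ℕ) < n ∧ r ≤ j + 1 ∧ pval π (j + 1) ≤ j + 1} =
      (n + 1 - r) - excr r π := by
  have hslots : {j ∈ range (n + 1) | j < n ∧ r ≤ j + 1 ∧ pval π (j + 1) ≤ j + 1} =
      {j ∈ range n | r ≤ j + 1} \ {j ∈ range n | r ≤ j + 1 ∧ j + 1 < pval π (j + 1)} := by
    ext j; simp only [mem_filter, mem_range, mem_sdiff]; omega
  have hall : {j ∈ range n | r ≤ j + 1} = Ico (r - 1) n := by
    ext j; simp only [mem_filter, mem_range, mem_Ico]; omega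
  rw [Fin.card_filter_univ_val _ fun j => j < n ∧ r ≤ j + 1 ∧ pval π (j + 1) ≤ j + 1, excr,
    card_filter_Icc_one, hslots,
    card_sdiff_of_subset (monotone_filter_right _ fun _ _ => And.left), hall, Nat.card_Ico]
  omega

end Excedances

theorem map_rdes_eq_map_excr {r : ℕ} (hr : 1 ≤ r) (n : ℕ) :
    (univ : Finset (Perm (Fin n))).val.map (rdes r) =
      (univ : Finset (Perm (Fin n))).val.map (excr r) := by
  induction n with
  | zero => rfl
  | succ n ih =>
    rw [map_univ_eq_bind_of_insertion bijective_insertMax (rdes_insertMax r)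
        (card_filter_insertCreatesRDes_oneLine hr),
      map_univ_eq_bind_of_insertion bijective_cycleInsertMax (excr_cycleInsertMax r)
        (card_filter_nonexcedance hr), ih]

theorem rdes_excr_equidistributed_general (n r : ℕ) (hr : 1 ≤ r) (k : ℕ) :
    (Finset.univ.filter (fun π : Equiv.Perm (Fin n) => rdes r π = k)).card =
    (Finset.univ.filter (fun π : Equiv.Perm (Fin n) => excr r π = k)).card := by
  rw [card_filter_eq_count_map_univ, card_filter_eq_count_map_univ, map_rdes_eq_map_excr hr]

/-- For n ≥ 1 and r ≥ 1 the statistics rdes and exc_r are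
equidistributed over S_n: for every k, the number of π ∈ S_n with
rdes(π) = k equals the number of π ∈ S_n with exc_r(π) = k. -/
theorem rdes_excr_equidistributed (n r : ℕ) (hn : 1 ≤ n) (hr : 1 ≤ r) (k : ℕ) :
    (Finset.univ.filter (fun π : Equiv.Perm (Fin n) => rdes r π = k)).card =
    (Finset.univ.filter (fun π : Equiv.Perm (Fin n) => excr r π = k)).card :=
  rdes_excr_equidistributed_general n r hr k
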